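/- arXiv:math/0607047 — 3 statements merged into one kernel-verified Lean document; each statement's English description precedes it below -/
import Mathlib

section
/- Let φ : ℂⁿ → ℝ be C² and let g₁, …, gₙ : ℂⁿ → ℂ be C² satisfying the compatibility conditions ∂g_j/∂z̄_k + (∂φ/∂z̄_k)·g_j = ∂g_k/∂z̄_j + (∂φ/∂z̄_j)·g_k for all j, k (i.e. D̄g = 0). Then for each k = 1, …, n: Σ_{j=1}^n ( (∂²φ/∂z_j∂z̄_k)·g_j − ∂²g_j/∂z_j∂z̄_k + (∂g_j/∂z̄_k)·(∂φ/∂z_j) − (∂g_j/∂z_j)·(∂φ/∂z̄_k) + (∂φ/∂z_j)·(∂φ/∂z̄_k)·g_j ) = Σ_{j=1}^n ( 2(∂²φ/∂z_j∂z̄_k)·g_j − (∂²φ/∂z_j∂z̄_j)·g_k − ∂²g_k/∂z_j∂z̄_j + (∂g_k/∂z̄_j)·(∂φ/∂z_j) − (∂g_k/∂z_j)·(∂φ/∂z̄_j) + (∂φ/∂z_j)·(∂φ/∂z̄_j)·g_k ); that is, on ker D̄ the operator D̄D̄* takes the stated form (Proposition 3.1 of the paper). -/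
open Complex

noncomputable section

/-- The Wirtinger derivative `∂f/∂z_j = (1/2)(∂f/∂x_j − i ∂f/∂y_j)` on `ℂⁿ`. -/
def dz {n : ℕ} (j : Fin n) (f : (Fin n → ℂ) → ℂ) (z : Fin n → ℂ) : ℂ :=
  (1/2) * (fderiv ℝ f z (Pi.single j 1) - Complex.I * fderiv ℝ f z (Pi.single j Complex.I))

/-- The Wirtinger derivative `∂f/∂z̄_j = (1/2)(∂f/∂x_j + i ∂f/∂y_j)` on `ℂⁿ`. -/
def dzbar {n : ℕ} (j : Fin n) (f : (Fin n → ℂ) → ℂ) (z : Fin n → ℂ) : ℂ :=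
  (1/2) * (fderiv ℝ f z (Pi.single j 1) + Complex.I * fderiv ℝ f z (Pi.single j Complex.I))

/-- Complexification of a real-valued function on `ℂⁿ`. -/
def cplx {n : ℕ} (φ : (Fin n → ℂ) → ℝ) : (Fin n → ℂ) → ℂ := fun z => (φ z : ℂ)

lemma fderiv_apply_diff {n : ℕ} {f : (Fin n → ℂ) → ℂ} (hf : ContDiff ℝ 2 f) (v : Fin n → ℂ) :
    Differentiable ℝ (fun z => fderiv ℝ f z v) := by
  have h1 : ContDiff ℝ 1 (fun z => fderiv ℝ f z) := hf.fderiv_right (by norm_num)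
  exact (h1.clm_apply contDiff_const).differentiable (by norm_num)

lemma dzbar_diff {n : ℕ} (j : Fin n) {f : (Fin n → ℂ) → ℂ} (hf : ContDiff ℝ 2 f) :
    Differentiable ℝ (dzbar j f) := by
  unfold dzbar
  exact (differentiable_const _).mul ((fderiv_apply_diff hf _).add
    ((differentiable_const _).mul (fderiv_apply_diff hf _)))

lemma dz_add {n : ℕ} (j : Fin n) {f h : (Fin n → ℂ) → ℂ} {z : Fin n → ℂ}
    (hf : DifferentiableAt ℝ f z) (hh : DifferentiableAt ℝ h z) :
    dz j (fun w => f w + h w) z = dz j f z + dz j h z := by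
  simp only [dz, fderiv_fun_add hf hh, ContinuousLinearMap.add_apply]
  ring

lemma dz_mul {n : ℕ} (j : Fin n) {f h : (Fin n → ℂ) → ℂ} {z : Fin n → ℂ}
    (hf : DifferentiableAt ℝ f z) (hh : DifferentiableAt ℝ h z) :
    dz j (fun w => f w * h w) z = dz j f z * h z + f z * dz j h z := by
  simp only [dz, fderiv_fun_mul hf hh, ContinuousLinearMap.add_apply,
    ContinuousLinearMap.smul_apply, smul_eq_mul]
  ring

/-- Proposition 3.1: on `ker D̄`, the `k`-th component of `D̄ D̄* g` takes the form
`Σ_j (2(∂²φ/∂z_j∂z̄_k)g_j − (∂²φ/∂z_j∂z̄_j)g_k − ∂²g_k/∂z_j∂z̄_j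
 + (∂g_k/∂z̄_j)(∂φ/∂z_j) − (∂g_k/∂z_j)(∂φ/∂z̄_j) + (∂φ/∂z_j)(∂φ/∂z̄_j)g_k)`. -/
theorem dbar_dbar_star_on_ker (n : ℕ) (φ : (Fin n → ℂ) → ℝ) (hφ : ContDiff ℝ 2 φ)
    (g : Fin n → (Fin n → ℂ) → ℂ) (hg : ∀ j, ContDiff ℝ 2 (g j))
    (hcompat : ∀ (j k : Fin n) (z : Fin n → ℂ),
      dzbar k (g j) z + dzbar k (cplx φ) z * g j z
        = dzbar j (g k) z + dzbar j (cplx φ) z * g k z)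
    (k : Fin n) (z : Fin n → ℂ) :
    ∑ j, (dz j (dzbar k (cplx φ)) z * g j z - dz j (dzbar k (g j)) z
        + dzbar k (g j) z * dz j (cplx φ) z - dz j (g j) z * dzbar k (cplx φ) z
        + dz j (cplx φ) z * dzbar k (cplx φ) z * g j z)
      = ∑ j, (2 * dz j (dzbar k (cplx φ)) z * g j z - dz j (dzbar j (cplx φ)) z * g k z
          - dz j (dzbar j (g k)) z
          + dzbar j (g k) z * dz j (cplx φ) z - dz j (g k) z * dzbar j (cplx φ) z
          + dz j (cplx φ) z * dzbar j (cplx φ) z * g k z) := by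
  have hφc : ContDiff ℝ 2 (cplx φ) := Complex.ofRealCLM.contDiff.comp hφ
  refine Finset.sum_congr rfl fun j _ => ?_
  -- apply dz j to the compatibility identity (as an identity of functions)
  have hfun : (fun w => dzbar k (g j) w + dzbar k (cplx φ) w * g j w)
      = (fun w => dzbar j (g k) w + dzbar j (cplx φ) w * g k w) := funext (hcompat j k)
  have hD : dz j (fun w => dzbar k (g j) w + dzbar k (cplx φ) w * g j w) z
      = dz j (fun w => dzbar j (g k) w + dzbar j (cplx φ) w * g k w) z := by rw [hfun]
  rw [dz_add j (h := fun w => dzbar k (cplx φ) w * g j w) ((dzbar_diff k (hg j)) z)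
        (((dzbar_diff k hφc) z).mul (((hg j).differentiable (by norm_num)) z)),
      dz_mul j ((dzbar_diff k hφc) z) (((hg j).differentiable (by norm_num)) z),
      dz_add j (h := fun w => dzbar j (cplx φ) w * g k w) ((dzbar_diff j (hg k)) z)
        (((dzbar_diff j hφc) z).mul (((hg k).differentiable (by norm_num)) z)),
      dz_mul j ((dzbar_diff j hφc) z) (((hg k).differentiable (by norm_num)) z)] at hD
  linear_combination (-1 : ℂ) * hD + dz j (cplx φ) z * (hcompat j k z)
end
end

section
/- Let φ(z₁, …, zₙ) = φ₁(z₁) + ⋯ + φₙ(zₙ) with each φ_j : ℂ → ℝ of class C², and let g₁, …, gₙ : ℂⁿ → ℂ be C² satisfying the compatibility conditions ∂g_j/∂z̄_k + (∂φ/∂z̄_k)·g_j = ∂g_k/∂z̄_j + (∂φ/∂z̄_j)·g_k for all j, k. Then for each k, the expression Σ_{j=1}^n ( 2(∂²φ/∂z_j∂z̄_k)·g_j − (∂²φ/∂z_j∂z̄_j)·g_k − ∂²g_k/∂z_j∂z̄_j + (∂g_k/∂z̄_j)·(∂φ/∂z_j) − (∂g_k/∂z_j)·(∂φ/∂z̄_j)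 + (∂φ/∂z_j)·(∂φ/∂z̄_j)·g_k ) equals 𝒮_k g_k, where 𝒮_k v = 2(∂²φ/∂z_k∂z̄_k)·v + Σ_{j=1}^n ( −(∂²φ/∂z_j∂z̄_j)·v − ∂²v/∂z_j∂z̄_j + (∂v/∂z̄_j)·(∂φ/∂z_j) − (∂v/∂z_j)·(∂φ/∂z̄_j) + (∂φ/∂z_j)·(∂φ/∂z̄_j)·v ). Hence for such separable weights the system D̄D̄*g = h splits into the n scalar equations 𝒮_k g_k = h_k. -/
open Complex

noncomputable section

/-- The Schrödinger-type operator
`𝒮_k v = 2(∂²φ/∂z_k∂z̄_k)v + Σ_j (−(∂²φ/∂z_j∂z̄_j)v − ∂²v/∂z_j∂z̄_j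
 + (∂v/∂z̄_j)(∂φ/∂z_j) − (∂v/∂z_j)(∂φ/∂z̄_j) + (∂φ/∂z_j)(∂φ/∂z̄_j)v)`. -/
def Sk {n : ℕ} (φ : (Fin n → ℂ) → ℝ) (k : Fin n) (v : (Fin n → ℂ) → ℂ)
    (z : Fin n → ℂ) : ℂ :=
  2 * dz k (dzbar k (cplx φ)) z * v z
    + ∑ j, (-(dz j (dzbar j (cplx φ)) z) * v z - dz j (dzbar j v) z
        + dzbar j v z * dz j (cplx φ) z - dz j v z * dzbar j (cplx φ) z
        + dz j (cplx φ) z * dzbar j (cplx φ) z * v z)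

lemma fderiv_comp_proj {n : ℕ} (k : Fin n) (f : ℂ → ℂ) (z : Fin n → ℂ)
    (hf : DifferentiableAt ℝ f (z k)) (v : Fin n → ℂ) :
    fderiv ℝ (fun w => f (w k)) z v = fderiv ℝ f (z k) (v k) := by
  have h := hf.hasFDerivAt.comp z
    ((ContinuousLinearMap.proj (R := ℝ) (φ := fun _ : Fin n => ℂ) k).hasFDerivAt)
  have h' : HasFDerivAt (fun w : Fin n → ℂ => f (w k))
      ((fderiv ℝ f (z k)).comp (ContinuousLinearMap.proj k)) z := h
  rw [h'.fderiv]
  rfl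

lemma dz_comp_proj_ne {n : ℕ} {j k : Fin n} (hjk : j ≠ k) (f : ℂ → ℂ)
    (hf : Differentiable ℝ f) (z : Fin n → ℂ) :
    dz j (fun w => f (w k)) z = 0 := by
  unfold dz
  rw [fderiv_comp_proj k f z (hf _), fderiv_comp_proj k f z (hf _),
    Pi.single_eq_of_ne hjk.symm, Pi.single_eq_of_ne hjk.symm]
  simp

lemma fderiv_cplx_sep {n : ℕ} (φs : Fin n → ℂ → ℝ) (hφs : ∀ j, ContDiff ℝ 2 (φs j))
    (k : Fin n) (z : Fin n → ℂ) (v : ℂ) :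
    fderiv ℝ (cplx (fun w => ∑ m, φs m (w m))) z (Pi.single k v)
      = ((fderiv ℝ (φs k) (z k) v : ℝ) : ℂ) := by
  have hterm : ∀ m : Fin n, HasFDerivAt (fun w : Fin n → ℂ => φs m (w m))
      ((fderiv ℝ (φs m) (z m)).comp (ContinuousLinearMap.proj m)) z := fun m =>
    (((hφs m).differentiable two_ne_zero (z m)).hasFDerivAt).comp z
      ((ContinuousLinearMap.proj (R := ℝ) (φ := fun _ : Fin n => ℂ) m).hasFDerivAt)
  have hsum := HasFDerivAt.fun_sum (fun m (_ : m ∈ Finset.univ) => hterm m)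
  have h := (Complex.ofRealCLM.hasFDerivAt.comp z hsum)
  have := h.fderiv
  rw [show (cplx (fun w => ∑ m, φs m (w m))) = Complex.ofRealCLM ∘ fun w => ∑ m, φs m (w m)
    from rfl, this]
  simp only [ContinuousLinearMap.coe_comp', Function.comp_apply,
    ContinuousLinearMap.coe_sum', Finset.sum_apply]
  rw [Finset.sum_eq_single k]
  · simp
  · intro m _ hmk
    simp [Pi.single_eq_of_ne hmk]
  · simp

lemma mixed_vanish {n : ℕ} (φs : Fin n → ℂ → ℝ) (hφs : ∀ j, ContDiff ℝ 2 (φs j))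
    {j k : Fin n} (hjk : j ≠ k) (z : Fin n → ℂ) :
    dz j (dzbar k (cplx (fun w => ∑ m, φs m (w m)))) z = 0 := by
  set F : ℂ → ℂ := fun w =>
    (1/2) * (((fderiv ℝ (φs k) w 1 : ℝ) : ℂ) + Complex.I * ((fderiv ℝ (φs k) w Complex.I : ℝ) : ℂ)) with hF
  have hfun : dzbar k (cplx (fun w => ∑ m, φs m (w m))) = fun w => F (w k) := by
    funext w
    unfold dzbar
    rw [fderiv_cplx_sep φs hφs k w 1, fderiv_cplx_sep φs hφs k w Complex.I]
  have hFdiff : Differentiable ℝ F := by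
    have h1 : ContDiff ℝ 1 (fderiv ℝ (φs k)) := (hφs k).fderiv_right (le_refl _)
    have h2 : ∀ c : ℂ, Differentiable ℝ (fun w => ((fderiv ℝ (φs k) w c : ℝ) : ℂ)) := by
      intro c
      exact Complex.ofRealCLM.differentiable.comp
        ((h1.clm_apply contDiff_const).differentiable one_ne_zero)
    exact (differentiable_const _).mul ((h2 1).add ((differentiable_const _).mul (h2 Complex.I)))
  rw [hfun]
  exact dz_comp_proj_ne hjk F hFdiff z

/-- For a separable weight `φ(z) = φ₁(z₁) + ⋯ + φₙ(zₙ)` and `g` with `D̄g = 0`,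
the `k`-th component of `D̄ D̄* g` equals `𝒮_k g_k`; the system `D̄ D̄* g = h`
splits into the `n` scalar equations `𝒮_k g_k = h_k`. -/
theorem dbar_dbar_star_splits (n : ℕ) (φ : (Fin n → ℂ) → ℝ) (φs : Fin n → ℂ → ℝ)
    (hφs : ∀ j, ContDiff ℝ 2 (φs j)) (hsep : φ = fun z => ∑ j, φs j (z j))
    (g : Fin n → (Fin n → ℂ) → ℂ) (hg : ∀ j, ContDiff ℝ 2 (g j))
    (hcompat : ∀ (j k : Fin n) (z : Fin n → ℂ),
      dzbar k (g j) z + dzbar k (cplx φ) z * g j z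
        = dzbar j (g k) z + dzbar j (cplx φ) z * g k z)
    (k : Fin n) (z : Fin n → ℂ) :
    ∑ j, (2 * dz j (dzbar k (cplx φ)) z * g j z - dz j (dzbar j (cplx φ)) z * g k z
        - dz j (dzbar j (g k)) z
        + dzbar j (g k) z * dz j (cplx φ) z - dz j (g k) z * dzbar j (cplx φ) z
        + dz j (cplx φ) z * dzbar j (cplx φ) z * g k z)
      = Sk φ k (g k) z := by
  have hM : ∀ j : Fin n, j ≠ k → dz j (dzbar k (cplx φ)) z = 0 := by
    intro j hjk
    rw [hsep]
    exact mixed_vanish φs hφs hjk z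
  have hsplit : ∀ j ∈ Finset.univ, (2 * dz j (dzbar k (cplx φ)) z * g j z
        - dz j (dzbar j (cplx φ)) z * g k z - dz j (dzbar j (g k)) z
        + dzbar j (g k) z * dz j (cplx φ) z - dz j (g k) z * dzbar j (cplx φ) z
        + dz j (cplx φ) z * dzbar j (cplx φ) z * g k z)
      = 2 * dz j (dzbar k (cplx φ)) z * g j z
        + (-(dz j (dzbar j (cplx φ)) z) * g k z - dz j (dzbar j (g k)) z
        + dzbar j (g k) z * dz j (cplx φ) z - dz j (g k) z * dzbar j (cplx φ) z
        + dz j (cplx φ) z * dzbar j (cplx φ) z * g k z) := fun j _ => by ring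
  rw [Finset.sum_congr rfl hsplit, Finset.sum_add_distrib, Sk]
  congr 1
  rw [Fintype.sum_eq_single k (fun j hjk => by rw [hM j hjk]; ring)]
end
end

section
/- Let φ : ℂⁿ → ℝ be C³ and v : ℂⁿ → ℂ be C². Write z_j = x_j + iy_j, a_j = −∂φ/∂y_j and b_j = ∂φ/∂x_j. Then for each k = 1, …, n: 2(∂²φ/∂z_k∂z̄_k)·v + Σ_{j=1}^n ( −(∂²φ/∂z_j∂z̄_j)·v − ∂²v/∂z_j∂z̄_j + (∂v/∂z̄_j)·(∂φ/∂z_j) − (∂v/∂z_j)·(∂φ/∂z̄_j) + (∂φ/∂z_j)·(∂φ/∂z̄_j)·v ) = (1/4)·[ −Σ_{j=1}^n (∂/∂x_j − i a_j)² v − Σ_{j=1}^n (∂/∂y_j − i b_j)² v ] + V_k·v, where (∂/∂x_j − i a_j)²v means applying the operator w ↦ ∂w/∂x_j − i a_j·w twice (similarly for the y_j-term), and V_k = 2(∂²φ/∂z_k∂z̄_k) − Σ_{j=1}^n (∂²φ/∂z_j∂z̄_j). That is, each operator 𝒮_k is a Schrödinger operator with magnetic potential (a, b) and electric potential V_k.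 -/
open Complex

noncomputable section

/-- The magnetic potential component `a_j = −∂φ/∂y_j`. -/
def aPot {n : ℕ} (φ : (Fin n → ℂ) → ℝ) (j : Fin n) (z : Fin n → ℂ) : ℝ :=
  -(fderiv ℝ φ z (Pi.single j Complex.I))

/-- The magnetic potential component `b_j = ∂φ/∂x_j`. -/
def bPot {n : ℕ} (φ : (Fin n → ℂ) → ℝ) (j : Fin n) (z : Fin n → ℂ) : ℝ :=
  fderiv ℝ φ z (Pi.single j 1)

/-- The magnetic derivative `(∂/∂x_j − i a_j) w`. -/
def magX {n : ℕ} (φ : (Fin n → ℂ) → ℝ) (j : Fin n) (w : (Fin n → ℂ) → ℂ)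
    (z : Fin n → ℂ) : ℂ :=
  fderiv ℝ w z (Pi.single j 1) - Complex.I * (aPot φ j z : ℂ) * w z

/-- The magnetic derivative `(∂/∂y_j − i b_j) w`. -/
def magY {n : ℕ} (φ : (Fin n → ℂ) → ℝ) (j : Fin n) (w : (Fin n → ℂ) → ℂ)
    (z : Fin n → ℂ) : ℂ :=
  fderiv ℝ w z (Pi.single j Complex.I) - Complex.I * (bPot φ j z : ℂ) * w z

/-- The electric potential `V_k = 2(∂²φ/∂z_k∂z̄_k) − Σ_j (∂²φ/∂z_j∂z̄_j)`. -/
def Vk {n : ℕ} (φ : (Fin n → ℂ) → ℝ) (k : Fin n) (z : Fin n → ℂ) : ℂ :=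
  2 * dz k (dzbar k (cplx φ)) z - ∑ j, dz j (dzbar j (cplx φ)) z

section Helpers

variable {n : ℕ}

private lemma diffAt_fderiv_apply {f : (Fin n → ℂ) → ℂ} (hf : ContDiff ℝ 2 f)
    (e : Fin n → ℂ) (z : Fin n → ℂ) :
    DifferentiableAt ℝ (fun w => fderiv ℝ f w e) z :=
  (((hf.fderiv_right (m := 1) (le_refl 2)).clm_apply contDiff_const).differentiable one_ne_zero) z

private lemma fderiv2_symm {f : (Fin n → ℂ) → ℂ} (hf : ContDiff ℝ 2 f)
    (z a b : Fin n → ℂ) :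
    fderiv ℝ (fun w => fderiv ℝ f w a) z b = fderiv ℝ (fun w => fderiv ℝ f w b) z a := by
  have hd : DifferentiableAt ℝ (fderiv ℝ f) z :=
    ((hf.fderiv_right (m := 1) (le_refl 2)).differentiable one_ne_zero) z
  have h1 : ∀ e e' : Fin n → ℂ, fderiv ℝ (fun w => fderiv ℝ f w e) z e'
      = fderiv ℝ (fderiv ℝ f) z e' e := by
    intro e e'
    rw [fderiv_clm_apply hd (differentiableAt_const e)]
    simp
  rw [h1, h1]
  exact (hf.contDiffAt.isSymmSndFDerivAt (by simp [minSmoothness_of_isRCLikeNormedField])) b a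

private lemma fderiv_cplx {φ : (Fin n → ℂ) → ℝ} (hφ : Differentiable ℝ φ)
    (z e : Fin n → ℂ) :
    fderiv ℝ (cplx φ) z e = ((fderiv ℝ φ z e : ℝ) : ℂ) := by
  have h : cplx φ = fun w => Complex.ofRealCLM (φ w) := rfl
  have h2 := (Complex.ofRealCLM.hasFDerivAt.comp z (hφ z).hasFDerivAt).fderiv
  rw [h, show (fun w => Complex.ofRealCLM (φ w)) = ⇑Complex.ofRealCLM ∘ φ from rfl, h2]
  rfl

private lemma keyJ {φ : (Fin n → ℂ) → ℝ} {v : (Fin n → ℂ) → ℂ}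
    (hφ : ContDiff ℝ 3 φ) (hv : ContDiff ℝ 2 v) (j : Fin n) (z : Fin n → ℂ) :
    -(dz j (dzbar j v) z) + dzbar j v z * dz j (cplx φ) z - dz j v z * dzbar j (cplx φ) z
      + dz j (cplx φ) z * dzbar j (cplx φ) z * v z
    = (1/4) * (-(magX φ j (magX φ j v) z) - magY φ j (magY φ j v) z) := by
  have hF : ContDiff ℝ 3 (cplx φ) := Complex.ofRealCLM.contDiff.comp hφ
  have hF2 : ContDiff ℝ 2 (cplx φ) := hF.of_le (by norm_num)
  have hφd : Differentiable ℝ φ := hφ.differentiable (by norm_num)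
  have hvd : Differentiable ℝ v := hv.differentiable (by norm_num)
  set e1 : Fin n → ℂ := Pi.single j 1 with he1
  set eI : Fin n → ℂ := Pi.single j Complex.I with heI
  have hdV : ∀ (e w : Fin n → ℂ), DifferentiableAt ℝ (fun u => fderiv ℝ v u e) w :=
    fun e w => diffAt_fderiv_apply hv e w
  have hdF : ∀ (e w : Fin n → ℂ), DifferentiableAt ℝ (fun u => fderiv ℝ (cplx φ) u e) w :=
    fun e w => diffAt_fderiv_apply hF2 e w
  have hcast : ∀ (w e : Fin n → ℂ), ((fderiv ℝ φ w e : ℝ) : ℂ) = fderiv ℝ (cplx φ) w e :=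
    fun w e => (fderiv_cplx hφd w e).symm
  have hmagX : ∀ u : (Fin n → ℂ) → ℂ,
      magX φ j u = fun w => fderiv ℝ u w e1 + Complex.I * fderiv ℝ (cplx φ) w eI * u w := by
    intro u; funext w
    simp only [magX, aPot, Complex.ofReal_neg, hcast, ← he1, ← heI]
    ring
  have hmagY : ∀ u : (Fin n → ℂ) → ℂ,
      magY φ j u = fun w => fderiv ℝ u w eI - Complex.I * fderiv ℝ (cplx φ) w e1 * u w := by
    intro u; funext w
    simp only [magY, bPot, hcast, ← he1, ← heI]
  -- expansion of the first-order magnetic operators' derivatives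
  have hexpand : ∀ (a b e : Fin n → ℂ) (c : ℂ),
      fderiv ℝ (fun w => fderiv ℝ v w a + c * fderiv ℝ (cplx φ) w b * v w) z e
        = fderiv ℝ (fun w => fderiv ℝ v w a) z e
          + c * (fderiv ℝ (cplx φ) z b * fderiv ℝ v z e
              + v z * fderiv ℝ (fun w => fderiv ℝ (cplx φ) w b) z e) := by
    intro a b e c
    have h1 : (fun w => fderiv ℝ v w a + c * fderiv ℝ (cplx φ) w b * v w)
        = fun w => fderiv ℝ v w a + c * (fderiv ℝ (cplx φ) w b * v w) := by
      funext w; ring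
    rw [h1, fderiv_fun_add (hdV a z) (((hdF b z).fun_mul (hvd z)).const_mul c),
        fderiv_const_mul ((hdF b z).fun_mul (hvd z)) c, fderiv_fun_mul (hdF b z) (hvd z)]
    simp only [ContinuousLinearMap.add_apply, ContinuousLinearMap.coe_smul',
      Pi.smul_apply, smul_eq_mul]
  have hdzbarv : dzbar j v = fun w =>
      (1/2 : ℂ) * (fderiv ℝ v w e1 + Complex.I * fderiv ℝ v w eI) := rfl
  have hexpand2 : ∀ e : Fin n → ℂ,
      fderiv ℝ (fun w => (1/2 : ℂ) * (fderiv ℝ v w e1 + Complex.I * fderiv ℝ v w eI)) z e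
        = (1/2 : ℂ) * (fderiv ℝ (fun w => fderiv ℝ v w e1) z e
            + Complex.I * fderiv ℝ (fun w => fderiv ℝ v w eI) z e) := by
    intro e
    rw [fderiv_const_mul ((hdV e1 z).fun_add ((hdV eI z).const_mul Complex.I)),
        fderiv_fun_add (hdV e1 z) ((hdV eI z).const_mul Complex.I),
        fderiv_const_mul (hdV eI z) Complex.I]
    simp only [ContinuousLinearMap.coe_smul', Pi.smul_apply, ContinuousLinearMap.add_apply,
      smul_eq_mul]
  have hXX : magX φ j (magX φ j v) z
      = (fderiv ℝ (fun w => fderiv ℝ v w e1) z e1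
          + Complex.I * (fderiv ℝ (cplx φ) z eI * fderiv ℝ v z e1
              + v z * fderiv ℝ (fun w => fderiv ℝ (cplx φ) w eI) z e1))
        + Complex.I * fderiv ℝ (cplx φ) z eI
            * (fderiv ℝ v z e1 + Complex.I * fderiv ℝ (cplx φ) z eI * v z) := by
    conv_lhs => rw [hmagX (magX φ j v)]
    simp only [hmagX v]
    rw [hexpand e1 eI e1 Complex.I]
  have hmagYfun : ∀ u : (Fin n → ℂ) → ℂ,
      magY φ j u = fun w => fderiv ℝ u w eI
        + (-Complex.I) * fderiv ℝ (cplx φ) w e1 * u w := by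
    intro u; rw [hmagY u]; funext w; ring
  have hYY : magY φ j (magY φ j v) z
      = (fderiv ℝ (fun w => fderiv ℝ v w eI) z eI
          + (-Complex.I) * (fderiv ℝ (cplx φ) z e1 * fderiv ℝ v z eI
              + v z * fderiv ℝ (fun w => fderiv ℝ (cplx φ) w e1) z eI))
        + (-Complex.I) * fderiv ℝ (cplx φ) z e1
            * (fderiv ℝ v z eI + (-Complex.I) * fderiv ℝ (cplx φ) z e1 * v z) := by
    conv_lhs => rw [hmagYfun (magY φ j v)]
    simp only [hmagYfun v]
    rw [hexpand eI e1 eI (-Complex.I)]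
  have hdzdzbar : dz j (dzbar j v) z
      = (1/2 : ℂ) * ((1/2 : ℂ) * (fderiv ℝ (fun w => fderiv ℝ v w e1) z e1
            + Complex.I * fderiv ℝ (fun w => fderiv ℝ v w eI) z e1)
          - Complex.I * ((1/2 : ℂ) * (fderiv ℝ (fun w => fderiv ℝ v w e1) z eI
            + Complex.I * fderiv ℝ (fun w => fderiv ℝ v w eI) z eI))) := by
    rw [show dz j (dzbar j v) z = (1/2 : ℂ) * (fderiv ℝ (dzbar j v) z e1
        - Complex.I * fderiv ℝ (dzbar j v) z eI) from rfl, hdzbarv, hexpand2 e1, hexpand2 eI]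
  rw [hXX, hYY, hdzdzbar]
  rw [fderiv2_symm hv z e1 eI, fderiv2_symm hF2 z e1 eI]
  simp only [dz, dzbar, ← he1, ← heI]
  linear_combination ((1/4 : ℂ) * (fderiv ℝ (fun w => fderiv ℝ v w eI) z eI
      + (fderiv ℝ (cplx φ) z e1)^2 * v z)) * Complex.I_sq

end Helpers

/-- For a `C³` weight `φ` and a `C²` function `v`, each operator `𝒮_k` is a
Schrödinger operator with magnetic potential `(a, b)` and electric potential `V_k`:
`𝒮_k v = (1/4)[−Σ_j (∂/∂x_j − i a_j)² v − Σ_j (∂/∂y_j − i b_j)² v] + V_k·v`. -/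
theorem Sk_schroedinger_form (n : ℕ) (φ : (Fin n → ℂ) → ℝ) (v : (Fin n → ℂ) → ℂ)
    (hφ : ContDiff ℝ 3 φ) (hv : ContDiff ℝ 2 v) (k : Fin n) (z : Fin n → ℂ) :
    Sk φ k v z
      = (1/4) * (-(∑ j, magX φ j (magX φ j v) z) - ∑ j, magY φ j (magY φ j v) z)
        + Vk φ k z * v z := by
  have key : ∀ j : Fin n,
      (-(dz j (dzbar j (cplx φ)) z) * v z - dz j (dzbar j v) z
        + dzbar j v z * dz j (cplx φ) z - dz j v z * dzbar j (cplx φ) z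
        + dz j (cplx φ) z * dzbar j (cplx φ) z * v z)
      = -(dz j (dzbar j (cplx φ)) z * v z)
        + ((1/4 : ℂ) * (-(magX φ j (magX φ j v) z))
            + (1/4 : ℂ) * (-(magY φ j (magY φ j v) z))) := by
    intro j
    linear_combination keyJ hφ hv j z
  simp only [Sk, Vk]
  rw [Finset.sum_congr rfl fun j _ => key j, Finset.sum_add_distrib, Finset.sum_add_distrib,
    ← Finset.mul_sum, ← Finset.mul_sum, Finset.sum_neg_distrib, Finset.sum_neg_distrib,
    Finset.sum_neg_distrib, ← Finset.sum_mul]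
  ring
end
end
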